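/- Let τ ≥ 0, κ ≥ 0, K ≥ 0, and let w : [0,τ] → ℝ be differentiable with w(σ) ≥ 0 for all σ, w(τ) = 0, and −w'(σ) ≤ κ + (K/√(1+σ²)) w(σ) for all σ ∈ [0,τ]. Then w(0) ≤ κ τ (τ + √(τ² + 1))^K. -/

import Mathlib

/-!
Multiplying by the integrating factor `exp (K · arsinh σ) = (σ + √(σ²+1))^K`, whose logarithmic
derivative is the kernel `K/√(1+σ²)`, turns the differential inequality into the statement that
`σ ↦ exp (K · arsinh σ) · (w σ + κ σ)` is nondecreasing on `[0,τ]`; comparing its values at the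
two endpoints gives the bound.
-/

open Real Set

theorem monotoneOn_Icc_of_hasDerivAt_nonneg {f f' : ℝ → ℝ} {s t : ℝ}
    (hf : ∀ x ∈ Icc s t, HasDerivAt f (f' x) x) (hf' : ∀ x ∈ Icc s t, 0 ≤ f' x) :
    MonotoneOn f (Icc s t) := by
  refine monotoneOn_of_hasDerivWithinAt_nonneg (f' := f') (convex_Icc s t)
    (fun x hx => (hf x hx).continuousAt.continuousWithinAt) (fun x hx => ?_) (fun x hx => ?_)
  all_goals rw [interior_Icc] at hx
  · exact (hf x (Ioo_subset_Icc_self hx)).hasDerivWithinAt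
  · exact hf' x (Ioo_subset_Icc_self hx)

theorem le_mul_exp_sub_of_neg_deriv_le {w w' a A : ℝ → ℝ} {s t κ : ℝ} (hst : s ≤ t)
    (hκ : 0 ≤ κ) (hw : ∀ σ ∈ Icc s t, HasDerivAt w (w' σ) σ)
    (hA : ∀ σ ∈ Icc s t, HasDerivAt A (a σ) σ) (ha : ∀ σ ∈ Icc s t, 0 ≤ a σ)
    (hineq : ∀ σ ∈ Icc s t, -w' σ ≤ κ + a σ * w σ) :
    w s ≤ (w t + κ * (t - s)) * exp (A t - A s) := by
  set g : ℝ → ℝ := fun σ => exp (A σ) * (w σ + κ * (σ - s))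
  have hg : ∀ σ ∈ Icc s t, HasDerivAt g
      (exp (A σ) * a σ * (w σ + κ * (σ - s)) + exp (A σ) * (w' σ + κ)) σ := fun σ hσ =>
    (hA σ hσ).exp.mul <|
      ((hw σ hσ).add (((hasDerivAt_id σ).sub_const s).const_mul κ)).congr_deriv (by simp)
  have hg_mono : MonotoneOn g (Icc s t) := by
    refine monotoneOn_Icc_of_hasDerivAt_nonneg hg fun σ hσ => ?_
    have hdecomp : exp (A σ) * a σ * (w σ + κ * (σ - s)) + exp (A σ) * (w' σ + κ)
        = exp (A σ) * (a σ * (κ * (σ - s)) + (w' σ + κ + a σ * w σ)) := by ring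
    have hσs : 0 ≤ σ - s := sub_nonneg.2 hσ.1
    have haσ := ha σ hσ
    have hineqσ := hineq σ hσ
    rw [hdecomp]
    exact mul_nonneg (exp_pos _).le (add_nonneg (by positivity) (by linarith))
  have hst' : g s ≤ g t := hg_mono (left_mem_Icc.2 hst) (right_mem_Icc.2 hst) hst
  simp only [g, sub_self, mul_zero, add_zero] at hst'
  rw [exp_sub, ← mul_div_assoc, le_div_iff₀ (exp_pos _)]
  linarith

theorem exp_mul_arsinh (K x : ℝ) : exp (K * arsinh x) = (x + √(x ^ 2 + 1)) ^ K := by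
  rw [mul_comm, exp_mul, exp_arsinh, add_comm (x ^ 2)]

theorem gronwall_reverse_differential_form_general
    (τ κ K : ℝ) (hτ : 0 ≤ τ) (hκ : 0 ≤ κ) (hK : 0 ≤ K)
    (w w' : ℝ → ℝ)
    (hderiv : ∀ σ ∈ Set.Icc (0 : ℝ) τ, HasDerivAt w (w' σ) σ)
    (hwτ : w τ = 0)
    (hineq : ∀ σ ∈ Set.Icc (0 : ℝ) τ, -w' σ ≤ κ + (K / Real.sqrt (1 + σ ^ 2)) * w σ) :
    w 0 ≤ κ * τ * (τ + Real.sqrt (τ ^ 2 + 1)) ^ K := by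
  have hA : ∀ σ ∈ Icc (0 : ℝ) τ,
      HasDerivAt (fun x => K * arsinh x) (K / √(1 + σ ^ 2)) σ := fun σ _ =>
    div_eq_mul_inv K _ ▸ (hasDerivAt_arsinh σ).const_mul K
  have hbound := le_mul_exp_sub_of_neg_deriv_le hτ hκ hderiv hA
    (fun σ _ => by positivity) hineq
  rwa [hwτ, arsinh_zero, mul_zero, sub_zero, sub_zero, zero_add, exp_mul_arsinh] at hbound

/-- Reversed-time Grönwall inequality with kernel `K/√(1+σ²)` (differential form):
if `w` is differentiable and nonnegative on `[0,τ]`, `w τ = 0`, and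
`−w'(σ) ≤ κ + (K/√(1+σ²)) w σ` for all `σ ∈ [0,τ]`, then
`w 0 ≤ κ τ (τ + √(τ²+1))^K`. -/
theorem gronwall_reverse_differential_form
    (τ κ K : ℝ) (hτ : 0 ≤ τ) (hκ : 0 ≤ κ) (hK : 0 ≤ K)
    (w w' : ℝ → ℝ)
    (hderiv : ∀ σ ∈ Set.Icc (0 : ℝ) τ, HasDerivAt w (w' σ) σ)
    (hnn : ∀ σ ∈ Set.Icc (0 : ℝ) τ, 0 ≤ w σ)
    (hwτ : w τ = 0)
    (hineq : ∀ σ ∈ Set.Icc (0 : ℝ) τ, -w' σ ≤ κ + (K / Real.sqrt (1 + σ ^ 2)) * w σ) :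
    w 0 ≤ κ * τ * (τ + Real.sqrt (τ ^ 2 + 1)) ^ K :=
  gronwall_reverse_differential_form_general τ κ K hτ hκ hK w w' hderiv hwτ hineq
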